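/- Fix n ≥ 1, let (α i)_{i : Fin (n*n)} be an orthonormal basis of Mₙ(ℂ) for the Hilbert–Schmidt inner product, and let δ : Mₙ(ℂ) → M_{n·n}(ℂ) be the unique linear map with δ(α i) = (α i) ⊗ₖ (α i), with Hilbert–Schmidt adjoint δ†. If δ is completely positive, then δ†(1) ≥ 1, i.e. δ†(1) − 1 is positive semidefinite; equivalently all eigenvalues of δ†(1) are at least 1. -/

import Mathlib

/-!
For a vector `x` put `ρ = x xᴴ`. Then `⟨x, δ†(1) x⟩ = ⟨δ ρ, 1⟩ = Tr δ(ρ)`. Since `δ` maps an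
orthonormal basis to the orthonormal family `αᵢ ⊗ αᵢ`, it is a Hilbert-Schmidt isometry, so
`‖δ ρ‖₂ = ‖ρ‖₂ = |x|²`; and `δ ρ` is positive semidefinite, so `‖δ ρ‖₂² = ∑ λᵢ² ≤ (∑ λᵢ)²`, i.e.
`‖δ ρ‖₂ ≤ Tr δ(ρ)`. Hence `|x|² ≤ ⟨x, δ†(1) x⟩`.
-/

open Matrix Kronecker ComplexOrder

noncomputable section

/-- The Hilbert-Schmidt inner product `⟨a, b⟩ = Tr(aᴴ b)` on square matrices. -/
def hsInner {m : Type*} [Fintype m] (a b : Matrix m m ℂ) : ℂ :=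
  (aᴴ * b).trace

/-- The amplification `id ⊗ Φ` of a linear map `Φ` between matrix algebras,
acting blockwise on matrices indexed by `Fin k × p`. -/
def amplify {p q : Type*} [Fintype p] [Fintype q]
    (Φ : Matrix p p ℂ →ₗ[ℂ] Matrix q q ℂ) (k : ℕ)
    (M : Matrix (Fin k × p) (Fin k × p) ℂ) :
    Matrix (Fin k × q) (Fin k × q) ℂ :=
  Matrix.of fun i j => Φ (Matrix.of fun a b => M (i.1, a) (j.1, b)) i.2 j.2

/-- A linear map between matrix algebras is completely positive if all its
amplifications send positive semidefinite matrices to positive semidefinite matrices. -/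
def IsCompletelyPositive {p q : Type*} [Fintype p] [Fintype q]
    (Φ : Matrix p p ℂ →ₗ[ℂ] Matrix q q ℂ) : Prop :=
  ∀ (k : ℕ) (M : Matrix (Fin k × p) (Fin k × p) ℂ),
    M.PosSemidef → (amplify Φ k M).PosSemidef

lemma Complex.le_of_sq_le_sq {a b : ℂ} (ha : 0 ≤ a) (hb : 0 ≤ b) (h : a ^ 2 ≤ b ^ 2) :
    a ≤ b := by
  obtain ⟨a, -, rfl⟩ := RCLike.nonneg_iff_exists_ofReal.mp ha
  obtain ⟨b, hb, rfl⟩ := RCLike.nonneg_iff_exists_ofReal.mp hb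
  exact_mod_cast le_of_pow_le_pow_left₀ two_ne_zero (Complex.zero_le_real.mp hb)
    (by exact_mod_cast h)

namespace Matrix

variable {n : Type*} [Fintype n] [DecidableEq n]

lemma IsHermitian.trace_mul_self {𝕜 : Type*} [RCLike 𝕜] {A : Matrix n n 𝕜} (hA : A.IsHermitian) :
    (A * A).trace = ∑ i, ((hA.eigenvalues i ^ 2 : ℝ) : 𝕜) := by
  conv_lhs => rw [hA.spectral_theorem, ← map_mul, Unitary.conjStarAlgAut_apply, trace_mul_cycle,
    Unitary.coe_star_mul_self, one_mul, diagonal_mul_diagonal, trace_diagonal]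
  simp [sq]

lemma PosSemidef.trace_mul_self_le {𝕜 : Type*} [RCLike 𝕜] {A : Matrix n n 𝕜} (hA : A.PosSemidef) :
    (A * A).trace ≤ A.trace ^ 2 := by
  rw [hA.1.trace_mul_self, hA.1.trace_eq_sum_eigenvalues]
  exact_mod_cast Finset.sum_sq_le_sq_sum_of_nonneg fun i _ => hA.eigenvalues_nonneg i

/-- Over `ℂ`, nonnegativity of the quadratic form already forces the matrix to be Hermitian. -/
lemma posSemidef_of_forall_dotProduct_mulVec_nonneg {A : Matrix n n ℂ}
    (h : ∀ x, 0 ≤ star x ⬝ᵥ (A *ᵥ x)) : A.PosSemidef := by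
  rw [← isPositive_toEuclideanLin_iff, LinearMap.isPositive_iff_complex]
  intro x
  rw [← inner_conj_symm, EuclideanSpace.inner_eq_star_dotProduct, dotProduct_comm]
  obtain ⟨hre, him⟩ := Complex.nonneg_iff.mp (h x.ofLp)
  simp [Complex.ext_iff, ← him, hre]

end Matrix

section hsInner

variable {m : Type*} [Fintype m]

def hsInnerₛₗ : Matrix m m ℂ →ₗ⋆[ℂ] Matrix m m ℂ →ₗ[ℂ] ℂ :=
  LinearMap.mk₂'ₛₗ (starRingEnd ℂ) (RingHom.id ℂ) hsInner
    (fun a b c => by simp [hsInner, add_mul])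
    (fun r a b => by simp [hsInner, conjTranspose_smul])
    (fun a b c => by simp [hsInner, mul_add])
    (fun r a b => by simp [hsInner])

lemma hsInner_map_map_of_span_eq_top {m' ι : Type*} [Fintype m']
    {v : ι → Matrix m m ℂ} (hv : Submodule.span ℂ (Set.range v) = ⊤)
    (f : Matrix m m ℂ →ₗ[ℂ] Matrix m' m' ℂ)
    (hf : ∀ i j, hsInner (f (v i)) (f (v j)) = hsInner (v i) (v j)) (a b : Matrix m m ℂ) :
    hsInner (f a) (f b) = hsInner a b := by
  have : (hsInnerₛₗ.comp f).compl₂ f = hsInnerₛₗ :=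
    LinearMap.ext_on_range hv fun i => LinearMap.ext_on_range hv fun j => hf i j
  exact LinearMap.congr_fun₂ this a b

lemma hsInner_kronecker {p : Type*} [Fintype p] (a c : Matrix m m ℂ) (b d : Matrix p p ℂ) :
    hsInner (a ⊗ₖ b) (c ⊗ₖ d) = hsInner a c * hsInner b d := by
  rw [hsInner, conjTranspose_kronecker, ← mul_kronecker_mul, trace_kronecker, hsInner, hsInner]

lemma hsInner_vecMulVec_left (x : m → ℂ) (a : Matrix m m ℂ) :
    hsInner (vecMulVec x (star x)) a = star x ⬝ᵥ (a *ᵥ x) := by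
  rw [hsInner, conjTranspose_vecMulVec, star_star, vecMulVec_mul, trace_vecMulVec, dotProduct_comm,
    dotProduct_mulVec]

lemma Matrix.IsHermitian.hsInner_left {a : Matrix m m ℂ} (ha : a.IsHermitian) (b : Matrix m m ℂ) :
    hsInner a b = (a * b).trace := by
  rw [hsInner, ha.eq]

end hsInner

lemma IsCompletelyPositive.posSemidef_map {p q : Type*} [Fintype p] [Fintype q]
    {Φ : Matrix p p ℂ →ₗ[ℂ] Matrix q q ℂ} (hΦ : IsCompletelyPositive Φ) {a : Matrix p p ℂ}
    (ha : a.PosSemidef) : (Φ a).PosSemidef :=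
  (hΦ 1 (a.submatrix Prod.snd Prod.snd) (ha.submatrix _)).submatrix fun i => ((0 : Fin 1), i)

theorem posSemidef_adjoint_one_sub_one_of_isometry {m m' : Type*} [Fintype m] [DecidableEq m]
    [Fintype m'] [DecidableEq m'] (δ : Matrix m m ℂ → Matrix m' m' ℂ)
    (δd : Matrix m' m' ℂ → Matrix m m ℂ) (hadj : ∀ a b, hsInner (δ a) b = hsInner a (δd b))
    (hiso : ∀ a b, hsInner (δ a) (δ b) = hsInner a b)
    (hpos : ∀ a, a.PosSemidef → (δ a).PosSemidef) :
    (δd 1 - 1).PosSemidef := by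
  refine posSemidef_of_forall_dotProduct_mulVec_nonneg fun x => ?_
  set ρ := vecMulVec x (star x)
  have hδρ : (δ ρ).PosSemidef := hpos ρ (posSemidef_vecMulVec_self_star x)
  have htrace : star x ⬝ᵥ (δd 1 *ᵥ x) = (δ ρ).trace := by
    rw [← hsInner_vecMulVec_left, ← hadj, hδρ.1.hsInner_left, mul_one]
  have hnorm : (star x ⬝ᵥ x) ^ 2 = (δ ρ * δ ρ).trace := by
    rw [← hδρ.1.hsInner_left, hiso, hsInner_vecMulVec_left, vecMulVec_mulVec, dotProduct_smul,
      op_smul_eq_mul, sq]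
  rw [sub_mulVec, one_mulVec, dotProduct_sub, sub_nonneg, htrace]
  exact Complex.le_of_sq_le_sq (dotProduct_star_self_nonneg x) hδρ.trace_nonneg
    (hnorm ▸ hδρ.trace_mul_self_le)

theorem stmt_10_general (n : ℕ)
    (α : Fin (n * n) → Matrix (Fin n) (Fin n) ℂ)
    (horth : ∀ i j, hsInner (α i) (α j) = if i = j then 1 else 0)
    (hspan : Submodule.span ℂ (Set.range α) = ⊤)
    (δ : Matrix (Fin n) (Fin n) ℂ →ₗ[ℂ] Matrix (Fin n × Fin n) (Fin n × Fin n) ℂ)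
    (hδ : ∀ i, δ (α i) = α i ⊗ₖ α i)
    (δd : Matrix (Fin n × Fin n) (Fin n × Fin n) ℂ →ₗ[ℂ] Matrix (Fin n) (Fin n) ℂ)
    (hadj : ∀ a b, hsInner (δ a) b = hsInner a (δd b))
    (hCP : IsCompletelyPositive δ) :
    (δd 1 - 1).PosSemidef := by
  have hiso : ∀ a b, hsInner (δ a) (δ b) = hsInner a b :=
    hsInner_map_map_of_span_eq_top hspan δ fun i j => by
      simp [hδ, hsInner_kronecker, horth]
  exact posSemidef_adjoint_one_sub_one_of_isometry δ δd hadj hiso fun _ => hCP.posSemidef_map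

/-- If δ is completely positive then δ†(1) ≥ 1, i.e. δ†(1) - 1 is positive
semidefinite. -/
theorem stmt_10 (n : ℕ) (hn : 1 ≤ n)
    (α : Fin (n * n) → Matrix (Fin n) (Fin n) ℂ)
    (horth : ∀ i j, hsInner (α i) (α j) = if i = j then 1 else 0)
    (hspan : Submodule.span ℂ (Set.range α) = ⊤)
    (δ : Matrix (Fin n) (Fin n) ℂ →ₗ[ℂ] Matrix (Fin n × Fin n) (Fin n × Fin n) ℂ)
    (hδ : ∀ i, δ (α i) = α i ⊗ₖ α i)
    (δd : Matrix (Fin n × Fin n) (Fin n × Fin n) ℂ →ₗ[ℂ] Matrix (Fin n) (Fin n) ℂ)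
    (hadj : ∀ a b, hsInner (δ a) b = hsInner a (δd b))
    (hCP : IsCompletelyPositive δ) :
    (δd 1 - 1).PosSemidef :=
  stmt_10_general n α horth hspan δ hδ δd hadj hCP
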